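/- Let q : ℝ×ℝ → ℂ be smooth and ρ ∈ ℝ. Then the zero-curvature equation ∂ₜU(λ) − ∂ₓV(λ) + U(λ)V(λ) − V(λ)U(λ) = 0 holds at every (x,t) ∈ ℝ² for every λ ∈ ℂ\{0} if and only if q satisfies the nonlocal equation (E) at every (x,t) ∈ ℝ². -/

import Mathlib

open Complex

/-- Partial derivative in the space variable `x` (first coordinate). -/
noncomputable def pdx (f : ℝ × ℝ → ℂ) : ℝ × ℝ → ℂ :=
  fun p => deriv (fun x => f (x, p.2)) p.1

/-- Partial derivative in the time variable `t` (second coordinate). -/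
noncomputable def pdt (f : ℝ × ℝ → ℂ) : ℝ × ℝ → ℂ :=
  fun p => deriv (fun t => f (p.1, t)) p.2

/-- The reverse space-time reflection `q̃(x,t) = q(-x,-t)`. -/
def tq (q : ℝ × ℝ → ℂ) : ℝ × ℝ → ℂ := fun p => q (-p.1, -p.2)

/-- `q̂₁(x,t) = (∂ₓq)(-x,-t)`. -/
noncomputable def hq1 (q : ℝ × ℝ → ℂ) : ℝ × ℝ → ℂ := fun p => pdx q (-p.1, -p.2)

/-- `q̂₂(x,t) = (∂ₓ²q)(-x,-t)`. -/
noncomputable def hq2 (q : ℝ × ℝ → ℂ) : ℝ × ℝ → ℂ := fun p => pdx (pdx q) (-p.1, -p.2)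

/-- The reverse space-time nonlocal equation (E) at a single point. -/
noncomputable def NonlocalEAt (q : ℝ × ℝ → ℂ) (ρ : ℝ) (p : ℝ × ℝ) : Prop :=
  I * pdt q p + I * pdx (pdx (pdx q)) p
    - 3 * pdx (fun p' => q p' * tq q p' * pdx q p' + (I / 2) * (q p') ^ 3 * (tq q p') ^ 2) p
    + (ρ : ℂ) * (2 * pdx (pdx q) p - 3 * (q p) ^ 3 * (tq q p) ^ 2)
    + (ρ : ℂ) * (-2 * I * (q p) ^ 2 * hq1 q p + 10 * I * q p * tq q p * pdx q p)
    + (ρ : ℂ) ^ 2 * (4 * (q p) ^ 2 * tq q p + 4 * I * pdx q p - 8 * q p)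
    + 8 * (ρ : ℂ) ^ 3 * q p = 0

/-- The reverse space-time nonlocal equation (E). -/
noncomputable def NonlocalE (q : ℝ × ℝ → ℂ) (ρ : ℝ) : Prop :=
  ∀ p : ℝ × ℝ, NonlocalEAt q ρ p

/-- Entry `V₁` of the nonlocal Lax matrix `V(λ)`. -/
noncomputable def Vent1 (q : ℝ × ℝ → ℂ) (ρ : ℝ) (l : ℂ) (p : ℝ × ℝ) : ℂ :=
  -(3 * I / 2) * (q p) ^ 2 * (tq q p) ^ 2 / l ^ 2 - 4 * I * (ρ : ℂ) ^ 2
    - hq1 q p * q p / l ^ 2 - pdx q p * tq q p / l ^ 2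
    + 2 * I * q p * tq q p / l ^ 4 + 8 * I * (ρ : ℂ) / l ^ 4 - 4 * I / l ^ 6

/-- Entry `V₂` of the nonlocal Lax matrix `V(λ)`. -/
noncomputable def Vent2 (q : ℝ × ℝ → ℂ) (ρ : ℝ) (l : ℂ) (p : ℝ × ℝ) : ℂ :=
  -pdx (pdx q) p / l - 3 * I * pdx q p * q p * tq q p / l + 2 * I * pdx q p / l ^ 3
    + (3 / 2) * (q p) ^ 3 * (tq q p) ^ 2 / l - 4 * q p * (ρ : ℂ) ^ 2 / l
    - 2 * (q p) ^ 2 * tq q p * (ρ : ℂ) / l - 2 * (q p) ^ 2 * tq q p / l ^ 3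
    - 4 * q p * (ρ : ℂ) / l ^ 3 + 4 * q p / l ^ 5

/-- Entry `V₃` of the nonlocal Lax matrix `V(λ)`. -/
noncomputable def Vent3 (q : ℝ × ℝ → ℂ) (ρ : ℝ) (l : ℂ) (p : ℝ × ℝ) : ℂ :=
  hq2 q p / l + 3 * I * hq1 q p * q p * tq q p / l - 2 * I * hq1 q p / l ^ 3
    - (3 / 2) * (q p) ^ 2 * (tq q p) ^ 3 / l + 2 * q p * (tq q p) ^ 2 * (ρ : ℂ) / l
    + 2 * q p * (tq q p) ^ 2 / l ^ 3 + 4 * tq q p * (ρ : ℂ) ^ 2 / l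
    + 4 * tq q p * (ρ : ℂ) / l ^ 3 - 4 * tq q p / l ^ 5

/-- The nonlocal Lax matrix `U(λ)`. -/
noncomputable def LaxU (q : ℝ × ℝ → ℂ) (ρ : ℝ) (l : ℂ) (p : ℝ × ℝ) :
    Matrix (Fin 2) (Fin 2) ℂ :=
  !![-I / l ^ 2 + (ρ : ℂ) * I, q p / l; -tq q p / l, I / l ^ 2 - (ρ : ℂ) * I]

/-- The nonlocal Lax matrix `V(λ)`. -/
noncomputable def LaxV (q : ℝ × ℝ → ℂ) (ρ : ℝ) (l : ℂ) (p : ℝ × ℝ) :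
    Matrix (Fin 2) (Fin 2) ℂ :=
  !![Vent1 q ρ l p, Vent2 q ρ l p; Vent3 q ρ l p, -Vent1 q ρ l p]

/-- Entrywise spatial derivative of a matrix-valued function. -/
noncomputable def pdxM (M : ℝ × ℝ → Matrix (Fin 2) (Fin 2) ℂ) (p : ℝ × ℝ) :
    Matrix (Fin 2) (Fin 2) ℂ :=
  Matrix.of fun i j => pdx (fun p' => M p' i j) p

/-- Entrywise time derivative of a matrix-valued function. -/
noncomputable def pdtM (M : ℝ × ℝ → Matrix (Fin 2) (Fin 2) ℂ) (p : ℝ × ℝ) :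
    Matrix (Fin 2) (Fin 2) ℂ :=
  Matrix.of fun i j => pdt (fun p' => M p' i j) p

section helpers
variable {f : ℝ × ℝ → ℂ}

lemma pdx_eq_fderiv (hf : ContDiff ℝ (⊤ : ℕ∞) f) : pdx f = fun p => fderiv ℝ f p (1, 0) := by
  funext p
  exact ((hf.differentiable (by simp) p).hasFDerivAt.comp_hasDerivAt p.1
    (HasDerivAt.prodMk (hasDerivAt_id p.1) (hasDerivAt_const p.1 p.2))).deriv

lemma pdt_eq_fderiv (hf : ContDiff ℝ (⊤ : ℕ∞) f) : pdt f = fun p => fderiv ℝ f p (0, 1) := by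
  funext p
  exact ((hf.differentiable (by simp) p).hasFDerivAt.comp_hasDerivAt p.2
    (HasDerivAt.prodMk (hasDerivAt_const p.2 p.1) (hasDerivAt_id p.2))).deriv

lemma contDiff_pdx (hf : ContDiff ℝ (⊤ : ℕ∞) f) : ContDiff ℝ (⊤ : ℕ∞) (pdx f) := by
  rw [pdx_eq_fderiv hf]
  exact (ContinuousLinearMap.apply ℝ ℂ ((1:ℝ),(0:ℝ))).contDiff.comp (hf.fderiv_right (by simp))

lemma hasDerivAt_px (hf : ContDiff ℝ (⊤ : ℕ∞) f) (x t : ℝ) :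
    HasDerivAt (fun s => f (s, t)) (pdx f (x, t)) x := by
  have h : HasDerivAt (fun s => f (s, t)) (fderiv ℝ f (x, t) (1, 0)) x :=
    (hf.differentiable (by simp) (x, t)).hasFDerivAt.comp_hasDerivAt x
      (HasDerivAt.prodMk (hasDerivAt_id x) (hasDerivAt_const x t))
  have e : pdx f (x, t) = fderiv ℝ f (x, t) (1, 0) := h.deriv
  rw [e]; exact h

lemma hasDerivAt_pt (hf : ContDiff ℝ (⊤ : ℕ∞) f) (x t : ℝ) :
    HasDerivAt (fun s => f (x, s)) (pdt f (x, t)) t := by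
  have h : HasDerivAt (fun s => f (x, s)) (fderiv ℝ f (x, t) (0, 1)) t :=
    (hf.differentiable (by simp) (x, t)).hasFDerivAt.comp_hasDerivAt t
      (HasDerivAt.prodMk (hasDerivAt_const t x) (hasDerivAt_id t))
  have e : pdt f (x, t) = fderiv ℝ f (x, t) (0, 1) := h.deriv
  rw [e]; exact h

lemma hasDerivAt_px_neg (hf : ContDiff ℝ (⊤ : ℕ∞) f) (x t : ℝ) :
    HasDerivAt (fun s => f (-s, -t)) (-pdx f (-x, -t)) x := by
  have h : HasDerivAt (fun s => f (-s, -t)) (fderiv ℝ f (-x, -t) (-1, 0)) x :=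
    (hf.differentiable (by simp) (-x, -t)).hasFDerivAt.comp_hasDerivAt x
      (HasDerivAt.prodMk ((hasDerivAt_id x).neg) (hasDerivAt_const x (-t)))
  have e : pdx f (-x, -t) = fderiv ℝ f (-x, -t) (1, 0) := by rw [pdx_eq_fderiv hf]
  have e2 : ((-1 : ℝ), (0 : ℝ)) = -((1 : ℝ), (0 : ℝ)) := by simp [Prod.ext_iff]
  rw [e, ← map_neg, ← e2]; exact h

lemma hasDerivAt_pt_neg (hf : ContDiff ℝ (⊤ : ℕ∞) f) (x t : ℝ) :
    HasDerivAt (fun s => f (-x, -s)) (-pdt f (-x, -t)) t := by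
  have h : HasDerivAt (fun s => f (-x, -s)) (fderiv ℝ f (-x, -t) (0, -1)) t :=
    (hf.differentiable (by simp) (-x, -t)).hasFDerivAt.comp_hasDerivAt t
      (HasDerivAt.prodMk (hasDerivAt_const t (-x)) ((hasDerivAt_id t).neg))
  have e : pdt f (-x, -t) = fderiv ℝ f (-x, -t) (0, 1) := by rw [pdt_eq_fderiv hf]
  have e2 : ((0 : ℝ), (-1 : ℝ)) = -((0 : ℝ), (1 : ℝ)) := by simp [Prod.ext_iff]
  rw [e, ← map_neg, ← e2]; exact h


lemma hasDerivAt_congr' {f g : ℝ → ℂ} {f' g' : ℂ} {x : ℝ} (h : HasDerivAt f f' x)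
    (h1 : f = g) (h2 : f' = g') : HasDerivAt g g' x := by subst h1; subst h2; exact h

end helpers

/-- Fully expanded polynomial form of the nonlocal equation (E). -/
noncomputable def Epoly (q : ℝ × ℝ → ℂ) (ρ : ℝ) (p : ℝ × ℝ) : ℂ :=
  I * pdt q p + I * pdx (pdx (pdx q)) p
    - 3 * ((pdx q p * tq q p - q p * hq1 q p) * pdx q p + q p * tq q p * pdx (pdx q) p
      + I / 2 * (3 * (q p) ^ 2 * pdx q p * (tq q p) ^ 2 - 2 * (q p) ^ 3 * tq q p * hq1 q p))
    + (ρ : ℂ) * (2 * pdx (pdx q) p - 3 * (q p) ^ 3 * (tq q p) ^ 2)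
    + (ρ : ℂ) * (-2 * I * (q p) ^ 2 * hq1 q p + 10 * I * q p * tq q p * pdx q p)
    + (ρ : ℂ) ^ 2 * (4 * (q p) ^ 2 * tq q p + 4 * I * pdx q p - 8 * q p)
    + 8 * (ρ : ℂ) ^ 3 * q p

lemma nonlocalEAt_iff_Epoly {q : ℝ × ℝ → ℂ} (hq : ContDiff ℝ (⊤ : ℕ∞) q) (ρ : ℝ) (x t : ℝ) :
    NonlocalEAt q ρ (x, t) ↔ Epoly q ρ (x, t) = 0 := by
  have hA := hasDerivAt_px hq x t
  have hB := hasDerivAt_px_neg hq x t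
  have hA1 := hasDerivAt_px (contDiff_pdx hq) x t
  have hP : HasDerivAt (fun s => q (s, t) * tq q (s, t) * pdx q (s, t)
        + I / 2 * (q (s, t)) ^ 3 * (tq q (s, t)) ^ 2)
      ((pdx q (x, t) * q (-x, -t) - q (x, t) * pdx q (-x, -t)) * pdx q (x, t)
        + q (x, t) * q (-x, -t) * pdx (pdx q) (x, t)
        + I / 2 * (3 * (q (x, t)) ^ 2 * pdx q (x, t) * (q (-x, -t)) ^ 2
            - 2 * (q (x, t)) ^ 3 * q (-x, -t) * pdx q (-x, -t))) x := by
    have h := ((hA.mul hB).mul hA1).add ((((hA.mul hA).mul hA).const_mul (I / 2)).mul (hB.mul hB))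
    exact hasDerivAt_congr' h (by funext s; simp only [tq, Pi.mul_apply, Pi.add_apply, Pi.sub_apply, Pi.neg_apply, Pi.pow_apply] <;> ring) (by simp only [Pi.mul_apply, Pi.add_apply, Pi.sub_apply, Pi.neg_apply, Pi.pow_apply]; ring)
  unfold NonlocalEAt
  rw [show pdx (fun p' => q p' * tq q p' * pdx q p' + I / 2 * (q p') ^ 3 * (tq q p') ^ 2)
        ((x, t) : ℝ × ℝ)
      = deriv (fun s => q (s, t) * tq q (s, t) * pdx q (s, t)
        + I / 2 * (q (s, t)) ^ 3 * (tq q (s, t)) ^ 2) x from rfl,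
    hP.deriv]
  simp only [Epoly, tq, hq1, hq2, neg_neg]

lemma lax_master {q : ℝ × ℝ → ℂ} (hq : ContDiff ℝ (⊤ : ℕ∞) q) (ρ : ℝ) (l : ℂ) (x t : ℝ) :
    pdtM (LaxU q ρ l) (x, t) - pdxM (LaxV q ρ l) (x, t)
      + (LaxU q ρ l (x, t) * LaxV q ρ l (x, t) - LaxV q ρ l (x, t) * LaxU q ρ l (x, t))
    = !![0, -I * Epoly q ρ (x, t) / l; -I * Epoly q ρ (-x, -t) / l, 0] := by
  have hqx := contDiff_pdx hq
  have hqxx := contDiff_pdx hqx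
  have hA := hasDerivAt_px hq x t
  have hB := hasDerivAt_px_neg hq x t
  have hA1 := hasDerivAt_px hqx x t
  have hB1 := hasDerivAt_px_neg hqx x t
  have hA2 := hasDerivAt_px hqxx x t
  have hB2 := hasDerivAt_px_neg hqxx x t
  have hAt := hasDerivAt_pt hq x t
  have hBt := hasDerivAt_pt_neg hq x t
  have hV1 : HasDerivAt (fun s => Vent1 q ρ l (s, t))
      (-(q (-x, -t) * pdx (pdx q) (x, t)) / l ^ 2
        + 2 * I * (q (-x, -t) * pdx q (x, t)) / l ^ 4
        + q (x, t) * pdx (pdx q) (-x, -t) / l ^ 2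
        - 2 * I * (q (x, t) * pdx q (-x, -t)) / l ^ 4
        - 3 * I * (q (x, t) * (q (-x, -t)) ^ 2 * pdx q (x, t)) / l ^ 2
        + 3 * I * ((q (x, t)) ^ 2 * q (-x, -t) * pdx q (-x, -t)) / l ^ 2) x := by
    have h := (((((((((hA.mul hA).const_mul (-(3 * I / 2))).mul (hB.mul hB)).div_const
      (l ^ 2)).sub_const (4 * I * (ρ : ℂ) ^ 2)).sub ((hB1.mul hA).div_const (l ^ 2))).sub
      ((hA1.mul hB).div_const (l ^ 2))).add
      (((hA.const_mul (2 * I)).mul hB).div_const (l ^ 4))).add_const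
      (8 * I * (ρ : ℂ) / l ^ 4)).sub_const (4 * I / l ^ 6)
    exact hasDerivAt_congr' h (by funext s; simp only [Vent1, tq, hq1, hq2, Pi.mul_apply, Pi.add_apply, Pi.sub_apply, Pi.neg_apply, Pi.pow_apply] <;> ring) (by simp only [Pi.mul_apply, Pi.add_apply, Pi.sub_apply, Pi.neg_apply, Pi.pow_apply]; ring)
  have hV2 : HasDerivAt (fun s => Vent2 q ρ l (s, t))
      (-(pdx (pdx (pdx q)) (x, t)) / l + 2 * I * pdx (pdx q) (x, t) / l ^ 3
        + 4 * pdx q (x, t) / l ^ 5 - 4 * pdx q (x, t) * (ρ : ℂ) / l ^ 3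
        - 4 * pdx q (x, t) * (ρ : ℂ) ^ 2 / l
        - 3 * I * q (-x, -t) * (pdx q (x, t)) ^ 2 / l
        + 3 * I * q (x, t) * pdx q (x, t) * pdx q (-x, -t) / l
        - 3 * I * q (x, t) * q (-x, -t) * pdx (pdx q) (x, t) / l
        - 4 * q (x, t) * q (-x, -t) * pdx q (x, t) / l ^ 3
        - 4 * q (x, t) * q (-x, -t) * pdx q (x, t) * (ρ : ℂ) / l
        + 2 * (q (x, t)) ^ 2 * pdx q (-x, -t) / l ^ 3
        + 2 * (q (x, t)) ^ 2 * pdx q (-x, -t) * (ρ : ℂ) / l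
        + (9 / 2) * (q (x, t)) ^ 2 * (q (-x, -t)) ^ 2 * pdx q (x, t) / l
        - 3 * (q (x, t)) ^ 3 * q (-x, -t) * pdx q (-x, -t) / l) x := by
    have h := (((((((((hA2.neg).div_const l).sub
      ((((hA1.const_mul (3 * I)).mul hA).mul hB).div_const l)).add
      ((hA1.const_mul (2 * I)).div_const (l ^ 3))).add
      (((((hA.mul hA).mul hA).const_mul ((3 : ℂ) / 2)).mul (hB.mul hB)).div_const l)).sub
      (((hA.const_mul 4).mul_const ((ρ : ℂ) ^ 2)).div_const l)).sub
      (((((hA.mul hA).const_mul 2).mul hB).mul_const (ρ : ℂ)).div_const l)).sub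
      ((((hA.mul hA).const_mul 2).mul hB).div_const (l ^ 3))).sub
      (((hA.const_mul 4).mul_const (ρ : ℂ)).div_const (l ^ 3))).add
      ((hA.const_mul 4).div_const (l ^ 5))
    exact hasDerivAt_congr' h (by funext s; simp only [Vent2, tq, hq1, hq2, Pi.mul_apply, Pi.add_apply, Pi.sub_apply, Pi.neg_apply, Pi.pow_apply] <;> ring) (by simp only [Pi.mul_apply, Pi.add_apply, Pi.sub_apply, Pi.neg_apply, Pi.pow_apply]; ring)
  have hV3 : HasDerivAt (fun s => Vent3 q ρ l (s, t))
      (-(pdx (pdx (pdx q)) (-x, -t)) / l + 2 * I * pdx (pdx q) (-x, -t) / l ^ 3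
        + 4 * pdx q (-x, -t) / l ^ 5 - 4 * pdx q (-x, -t) * (ρ : ℂ) / l ^ 3
        - 4 * pdx q (-x, -t) * (ρ : ℂ) ^ 2 / l
        + 3 * I * q (-x, -t) * pdx q (x, t) * pdx q (-x, -t) / l
        + 2 * (q (-x, -t)) ^ 2 * pdx q (x, t) / l ^ 3
        + 2 * (q (-x, -t)) ^ 2 * pdx q (x, t) * (ρ : ℂ) / l
        - 3 * I * q (x, t) * (pdx q (-x, -t)) ^ 2 / l
        - 3 * I * q (x, t) * q (-x, -t) * pdx (pdx q) (-x, -t) / l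
        - 4 * q (x, t) * q (-x, -t) * pdx q (-x, -t) / l ^ 3
        - 4 * q (x, t) * q (-x, -t) * pdx q (-x, -t) * (ρ : ℂ) / l
        - 3 * q (x, t) * (q (-x, -t)) ^ 3 * pdx q (x, t) / l
        + (9 / 2) * (q (x, t)) ^ 2 * (q (-x, -t)) ^ 2 * pdx q (-x, -t) / l) x := by
    have h := ((((((((hB2.div_const l).add
      ((((hB1.const_mul (3 * I)).mul hA).mul hB).div_const l)).sub
      ((hB1.const_mul (2 * I)).div_const (l ^ 3))).sub
      ((((hA.mul hA).const_mul ((3 : ℂ) / 2)).mul ((hB.mul hB).mul hB)).div_const l)).add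
      ((((hA.const_mul 2).mul (hB.mul hB)).mul_const (ρ : ℂ)).div_const l)).add
      (((hA.const_mul 2).mul (hB.mul hB)).div_const (l ^ 3))).add
      (((hB.const_mul 4).mul_const ((ρ : ℂ) ^ 2)).div_const l)).add
      (((hB.const_mul 4).mul_const (ρ : ℂ)).div_const (l ^ 3))).sub
      ((hB.const_mul 4).div_const (l ^ 5))
    exact hasDerivAt_congr' h (by funext s; simp only [Vent3, tq, hq1, hq2, Pi.mul_apply, Pi.add_apply, Pi.sub_apply, Pi.neg_apply, Pi.pow_apply] <;> ring) (by simp only [Pi.mul_apply, Pi.add_apply, Pi.sub_apply, Pi.neg_apply, Pi.pow_apply]; ring)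
  ext i j
  fin_cases i <;> fin_cases j <;>
    simp only [pdtM, pdxM, LaxU, LaxV, Matrix.of_apply, Matrix.sub_apply, Matrix.add_apply,
      Matrix.mul_apply, Fin.sum_univ_two, Matrix.cons_val', Matrix.cons_val_zero,
      Matrix.cons_val_one, Matrix.head_cons, Matrix.head_fin_const, Matrix.empty_val',
      Matrix.cons_val_fin_one, Fin.isValue, Fin.zero_eta, Fin.mk_one, Matrix.vecHead, Matrix.vecTail]
  · rw [show pdt (fun p' : ℝ × ℝ => -I / l ^ 2 + (ρ : ℂ) * I) ((x, t) : ℝ × ℝ)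
        = deriv (fun s : ℝ => -I / l ^ 2 + (ρ : ℂ) * I) t from rfl, deriv_const,
      show pdx (fun p' => Vent1 q ρ l p') ((x, t) : ℝ × ℝ)
        = deriv (fun s => Vent1 q ρ l (s, t)) x from rfl, hV1.deriv]
    simp only [Vent1, Vent2, Vent3, tq, hq1, hq2, neg_neg]
    ring_nf
    all_goals (simp only [Complex.I_sq]; ring)
  · rw [show pdt (fun p' => q p' / l) ((x, t) : ℝ × ℝ)
        = deriv (fun s => q (x, s) / l) t from rfl, (hAt.div_const l).deriv,
      show pdx (fun p' => Vent2 q ρ l p') ((x, t) : ℝ × ℝ)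
        = deriv (fun s => Vent2 q ρ l (s, t)) x from rfl, hV2.deriv]
    simp only [Vent1, Vent2, Vent3, Epoly, tq, hq1, hq2, neg_neg]
    ring_nf
    all_goals (simp only [Complex.I_sq]; ring)
  · rw [show pdt (fun p' => -tq q p' / l) ((x, t) : ℝ × ℝ)
        = deriv (fun s => -q (-x, -s) / l) t from rfl, (hasDerivAt_congr' ((hBt.neg).div_const l) (g := fun s => -q (-x, -s) / l) rfl rfl).deriv,
      show pdx (fun p' => Vent3 q ρ l p') ((x, t) : ℝ × ℝ)
        = deriv (fun s => Vent3 q ρ l (s, t)) x from rfl, hV3.deriv]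
    simp only [Vent1, Vent2, Vent3, Epoly, tq, hq1, hq2, neg_neg]
    ring_nf
    all_goals (simp only [Complex.I_sq]; ring)
  · rw [show pdt (fun p' : ℝ × ℝ => I / l ^ 2 - (ρ : ℂ) * I) ((x, t) : ℝ × ℝ)
        = deriv (fun s : ℝ => I / l ^ 2 - (ρ : ℂ) * I) t from rfl, deriv_const,
      show pdx (fun p' => -Vent1 q ρ l p') ((x, t) : ℝ × ℝ)
        = deriv (fun s => -Vent1 q ρ l (s, t)) x from rfl, (hasDerivAt_congr' (hV1.neg) (g := fun s => -Vent1 q ρ l (s, t)) rfl rfl).deriv]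
    simp only [Vent1, Vent2, Vent3, tq, hq1, hq2, neg_neg]
    ring_nf
    all_goals (simp only [Complex.I_sq]; ring)

/-- the zero-curvature equation for the nonlocal Lax pair `(U(λ), V(λ))`
holds for every nonzero `λ` iff `q` solves the nonlocal equation (E). -/
theorem nonlocal_zero_curvature_iff_nonlocal_equation
    (q : ℝ × ℝ → ℂ) (hq : ContDiff ℝ (⊤ : ℕ∞) q) (ρ : ℝ) :
    (∀ l : ℂ, l ≠ 0 → ∀ p : ℝ × ℝ,
        pdtM (LaxU q ρ l) p - pdxM (LaxV q ρ l) p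
          + (LaxU q ρ l p * LaxV q ρ l p - LaxV q ρ l p * LaxU q ρ l p) = 0)
      ↔ NonlocalE q ρ :=  by
  constructor
  · intro h p
    obtain ⟨x, t⟩ := p
    have h1 := h 1 one_ne_zero (x, t)
    rw [lax_master hq ρ 1 x t] at h1
    have h01 := congrFun (congrFun h1 0) 1
    simp only [Matrix.of_apply, Matrix.cons_val', Matrix.cons_val_zero, Matrix.cons_val_one,
      Matrix.head_cons, Matrix.empty_val', Matrix.cons_val_fin_one, Matrix.head_fin_const,
      Matrix.zero_apply, Fin.isValue, Fin.zero_eta, Fin.mk_one, Matrix.vecHead, Matrix.vecTail] at h01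
    rw [nonlocalEAt_iff_Epoly hq ρ x t]
    linear_combination I * h01 + Epoly q ρ (x, t) * Complex.I_sq
  · intro hE l hl p
    obtain ⟨x, t⟩ := p
    rw [lax_master hq ρ l x t,
      (nonlocalEAt_iff_Epoly hq ρ x t).1 (hE (x, t)),
      (nonlocalEAt_iff_Epoly hq ρ (-x) (-t)).1 (hE (-x, -t))]
    ext i j
    fin_cases i <;> fin_cases j <;>
      simp [Matrix.zero_apply]
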